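/- arXiv:1410.7404 — 2 statements merged into one kernel-verified Lean document; each statement's English description precedes it below -/
import Mathlib

section
/- If Y = (Y_1,...,Y_m) is a representation of X = (X_1,...,X_n), with all variables discrete (finite-valued), then TC(X) ≤ TC(Y) + TC_L(X;Y) + Σ_{i=1}^n H(X_i|Y). -/
open Finset

/-- Probability that the random variable `f` (on finite sample space `Ω` with pmf `p`)
takes the value `a`. -/
noncomputable def prob {Ω α : Type} [Fintype Ω] [DecidableEq α]
    (p : Ω → ℝ) (f : Ω → α) (a : α) : ℝ :=
  ∑ ω : Ω, if f ω = a then p ω else 0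

/-- Shannon entropy (in nats) of the random variable `f`. -/
noncomputable def ent {Ω α : Type} [Fintype Ω] [Fintype α] [DecidableEq α]
    (p : Ω → ℝ) (f : Ω → α) : ℝ :=
  -∑ a : α, prob p f a * Real.log (prob p f a)

/-- Mutual information `I(f : g)`. -/
noncomputable def mi {Ω α β : Type} [Fintype Ω] [Fintype α] [DecidableEq α]
    [Fintype β] [DecidableEq β] (p : Ω → ℝ) (f : Ω → α) (g : Ω → β) : ℝ :=
  ent p f + ent p g - ent p (fun ω => (f ω, g ω))

/-- Conditional entropy `H(f | g)`. -/
noncomputable def condEnt {Ω α β : Type} [Fintype Ω] [Fintype α] [DecidableEq α]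
    [Fintype β] [DecidableEq β] (p : Ω → ℝ) (f : Ω → α) (g : Ω → β) : ℝ :=
  ent p (fun ω => (f ω, g ω)) - ent p g

/-- Conditional mutual information `I(f : g | h)`. -/
noncomputable def condMI {Ω α β γ : Type} [Fintype Ω] [Fintype α] [DecidableEq α]
    [Fintype β] [DecidableEq β] [Fintype γ] [DecidableEq γ]
    (p : Ω → ℝ) (f : Ω → α) (g : Ω → β) (h : Ω → γ) : ℝ :=
  condEnt p f h + condEnt p g h - condEnt p (fun ω => (f ω, g ω)) h

/-- The joint random variable of a finite family of random variables. -/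
def joint {Ω : Type} {n : ℕ} {V : Fin n → Type} (X : ∀ i, Ω → V i) : Ω → (∀ i, V i) :=
  fun ω i => X i ω

/-- Total correlation `TC(X) = ∑ᵢ H(Xᵢ) − H(X)`. -/
noncomputable def tc {Ω : Type} [Fintype Ω] {n : ℕ} {V : Fin n → Type}
    [∀ i, Fintype (V i)] [∀ i, DecidableEq (V i)]
    (p : Ω → ℝ) (X : ∀ i, Ω → V i) : ℝ :=
  (∑ i, ent p (X i)) - ent p (joint X)

/-- Conditional total correlation `TC(X|g) = ∑ᵢ H(Xᵢ|g) − H(X|g)`. -/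
noncomputable def tcCond {Ω : Type} [Fintype Ω] {n : ℕ} {V : Fin n → Type}
    [∀ i, Fintype (V i)] [∀ i, DecidableEq (V i)]
    {β : Type} [Fintype β] [DecidableEq β]
    (p : Ω → ℝ) (X : ∀ i, Ω → V i) (g : Ω → β) : ℝ :=
  (∑ i, condEnt p (X i) g) - condEnt p (joint X) g

/-- `Y = (Y₁,…,Y_m)` is a representation of (the random variable) `f`:
the `Yⱼ` are conditionally independent given `f`, i.e.
`p(a,y) = p(a) ∏ⱼ p(yⱼ|a)`, written multiplicatively to avoid division:
`p(a)^(m-1) · p(a,y) = ∏ⱼ p(a,yⱼ)`. -/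
def IsRepresentation {Ω : Type} [Fintype Ω] {α : Type} [DecidableEq α]
    {m : ℕ} {W : Fin m → Type} [∀ j, DecidableEq (W j)]
    (p : Ω → ℝ) (f : Ω → α) (Y : ∀ j, Ω → W j) : Prop :=
  ∀ (a : α) (y : ∀ j, W j),
    prob p f a ^ (m - 1) * prob p (fun ω => (f ω, joint Y ω)) (a, y)
      = ∏ j, prob p (fun ω => (f ω, Y j ω)) (a, y j)

/-- `TC_L(X;Y) = ∑ᵢ I(Y:Xᵢ) − ∑ⱼ I(Yⱼ:X)`. -/
noncomputable def tcL {Ω : Type} [Fintype Ω] {n m : ℕ}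
    {V : Fin n → Type} [∀ i, Fintype (V i)] [∀ i, DecidableEq (V i)]
    {W : Fin m → Type} [∀ j, Fintype (W j)] [∀ j, DecidableEq (W j)]
    (p : Ω → ℝ) (X : ∀ i, Ω → V i) (Y : ∀ j, Ω → W j) : ℝ :=
  (∑ i, mi p (joint Y) (X i)) - ∑ j, mi p (Y j) (joint X)

section Aux

lemma my_prob_nonneg {Ω α : Type} [Fintype Ω] [DecidableEq α]
    (p : Ω → ℝ) (hp0 : ∀ ω, 0 ≤ p ω) (f : Ω → α) (a : α) : 0 ≤ prob p f a := by
  unfold prob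
  apply Finset.sum_nonneg
  intro ω _
  split
  · exact hp0 ω
  · exact le_rfl

lemma my_self_le_prob {Ω α : Type} [Fintype Ω] [DecidableEq α]
    (p : Ω → ℝ) (hp0 : ∀ ω, 0 ≤ p ω) (f : Ω → α) (ω₀ : Ω) :
    p ω₀ ≤ prob p f (f ω₀) := by
  unfold prob
  have h := Finset.single_le_sum (f := fun ω => if f ω = f ω₀ then p ω else 0)
    (fun ω _ => by split <;> [exact hp0 ω; exact le_rfl]) (Finset.mem_univ ω₀)
  simpa using h

lemma my_prob_pair_le_snd {Ω α β : Type} [Fintype Ω] [DecidableEq α] [DecidableEq β]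
    (p : Ω → ℝ) (hp0 : ∀ ω, 0 ≤ p ω) (f : Ω → α) (g : Ω → β) (a : α) (b : β) :
    prob p (fun ω => (f ω, g ω)) (a, b) ≤ prob p g b := by
  unfold prob
  apply Finset.sum_le_sum
  intro ω _
  split_ifs with h1 h2
  · exact le_rfl
  · exact absurd (congrArg Prod.snd h1) h2
  · exact hp0 ω
  · exact le_rfl

lemma my_lotus {Ω α : Type} [Fintype Ω] [Fintype α] [DecidableEq α]
    (p : Ω → ℝ) (f : Ω → α) (g : α → ℝ) :
    ∑ a, prob p f a * g a = ∑ ω, p ω * g (f ω) := by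
  unfold prob
  simp only [Finset.sum_mul]
  rw [Finset.sum_comm]
  refine Finset.sum_congr rfl fun ω _ => ?_
  simp only [ite_mul, zero_mul]
  rw [Finset.sum_ite_eq Finset.univ (f ω) fun a => p ω * g a]
  simp

lemma my_ent_eq {Ω α : Type} [Fintype Ω] [Fintype α] [DecidableEq α]
    (p : Ω → ℝ) (f : Ω → α) :
    ent p f = -∑ ω, p ω * Real.log (prob p f (f ω)) := by
  rw [ent, my_lotus]

lemma my_prob_swap {Ω α β : Type} [Fintype Ω] [DecidableEq α] [DecidableEq β]
    (p : Ω → ℝ) (f : Ω → α) (g : Ω → β) (a : α) (b : β) :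
    prob p (fun ω => (f ω, g ω)) (a, b) = prob p (fun ω => (g ω, f ω)) (b, a) := by
  unfold prob
  refine Finset.sum_congr rfl fun ω _ => ?_
  have h : ((f ω, g ω) = (a, b)) ↔ ((g ω, f ω) = (b, a)) := by
    simp only [Prod.mk.injEq]
    exact and_comm
  rw [if_congr h rfl rfl]

lemma my_ent_swap {Ω α β : Type} [Fintype Ω] [Fintype α] [DecidableEq α]
    [Fintype β] [DecidableEq β] (p : Ω → ℝ) (f : Ω → α) (g : Ω → β) :
    ent p (fun ω => (f ω, g ω)) = ent p (fun ω => (g ω, f ω)) := by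
  rw [my_ent_eq, my_ent_eq]
  congr 1
  refine Finset.sum_congr rfl fun ω _ => ?_
  rw [my_prob_swap]

lemma my_ent_le_ent_pair {Ω α β : Type} [Fintype Ω] [Fintype α] [DecidableEq α]
    [Fintype β] [DecidableEq β] (p : Ω → ℝ) (hp0 : ∀ ω, 0 ≤ p ω)
    (f : Ω → α) (g : Ω → β) :
    ent p g ≤ ent p (fun ω => (f ω, g ω)) := by
  rw [my_ent_eq, my_ent_eq]
  apply neg_le_neg
  apply Finset.sum_le_sum
  intro ω _
  rcases eq_or_lt_of_le (hp0 ω) with h | h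
  · simp [← h]
  · apply mul_le_mul_of_nonneg_left _ h.le
    apply Real.log_le_log
    · exact lt_of_lt_of_le h (my_self_le_prob p hp0 (fun ω' => (f ω', g ω')) ω)
    · exact my_prob_pair_le_snd p hp0 f g (f ω) (g ω)

lemma my_repr_sum_ent {Ω : Type} [Fintype Ω] {n m : ℕ}
    {V : Fin n → Type} [∀ i, Fintype (V i)] [∀ i, DecidableEq (V i)]
    {W : Fin m → Type} [∀ j, Fintype (W j)] [∀ j, DecidableEq (W j)]
    (p : Ω → ℝ) (hp0 : ∀ ω, 0 ≤ p ω)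
    (X : ∀ i, Ω → V i) (Y : ∀ j, Ω → W j)
    (hrep : IsRepresentation p (joint X) Y) :
    ∑ j, ent p (fun ω => (joint X ω, Y j ω))
      = ent p (fun ω => (joint X ω, joint Y ω)) + ((m : ℝ) - 1) * ent p (joint X) := by
  have key : ∀ ω, ∑ j, p ω * Real.log (prob p (fun ω' => (joint X ω', Y j ω')) (joint X ω, Y j ω))
      = p ω * Real.log (prob p (fun ω' => (joint X ω', joint Y ω')) (joint X ω, joint Y ω))
        + ((m : ℝ) - 1) * (p ω * Real.log (prob p (joint X) (joint X ω))) := by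
    intro ω
    rcases eq_or_lt_of_le (hp0 ω) with h | h
    · simp [← h]
    rcases Nat.eq_zero_or_pos m with hm | hm
    · subst hm
      have hq : prob p (fun ω' => (joint X ω', joint Y ω')) (joint X ω, joint Y ω)
          = prob p (joint X) (joint X ω) := by
        unfold prob
        refine Finset.sum_congr rfl fun ω' _ => ?_
        have h' : ((joint X ω', joint Y ω') = (joint X ω, joint Y ω)) ↔
            (joint X ω' = joint X ω) := by
          simp only [Prod.mk.injEq]
          exact and_iff_left (Subsingleton.elim _ _)
        rw [if_congr h' rfl rfl]
      rw [hq]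
      simp
    · have hq : 0 < prob p (fun ω' => (joint X ω', joint Y ω')) (joint X ω, joint Y ω) :=
        lt_of_lt_of_le h (my_self_le_prob p hp0 (fun ω' => (joint X ω', joint Y ω')) ω)
      have hr : 0 < prob p (joint X) (joint X ω) :=
        lt_of_lt_of_le h (my_self_le_prob p hp0 (joint X) ω)
      have hpj : ∀ j, 0 < prob p (fun ω' => (joint X ω', Y j ω')) (joint X ω, Y j ω) :=
        fun j => lt_of_lt_of_le h (my_self_le_prob p hp0 (fun ω' => (joint X ω', Y j ω')) ω)
      have hrep' := hrep (joint X ω) (joint Y ω)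
      simp only [show ∀ j, joint Y ω j = Y j ω from fun _ => rfl] at hrep'
      have hlog := congrArg Real.log hrep'
      rw [Real.log_mul (pow_ne_zero _ hr.ne') hq.ne', Real.log_pow,
        Real.log_prod (fun j _ => (hpj j).ne')] at hlog
      rw [← Finset.mul_sum, ← hlog, Nat.cast_sub hm, Nat.cast_one]
      ring
  simp only [my_ent_eq]
  rw [Finset.sum_neg_distrib, Finset.sum_comm]
  have h2 : ∀ ω, ∑ j, p ω * Real.log (prob p (fun ω' => (joint X ω', Y j ω')) (joint X ω, Y j ω))
      = p ω * Real.log (prob p (fun ω' => (joint X ω', joint Y ω')) (joint X ω, joint Y ω))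
        + ((m : ℝ) - 1) * (p ω * Real.log (prob p (joint X) (joint X ω))) := key
  rw [Finset.sum_congr rfl fun ω _ => h2 ω, Finset.sum_add_distrib, ← Finset.mul_sum]
  ring

end Aux

/-- if `Y` is a representation of `X` (all variables finite-valued), then
`TC(X) ≤ TC(Y) + TC_L(X;Y) + ∑ᵢ H(Xᵢ|Y)`. -/
theorem stmt_9 {Ω : Type} [Fintype Ω] {n m : ℕ}
    {V : Fin n → Type} [∀ i, Fintype (V i)] [∀ i, DecidableEq (V i)]
    {W : Fin m → Type} [∀ j, Fintype (W j)] [∀ j, DecidableEq (W j)]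
    (p : Ω → ℝ) (hp0 : ∀ ω, 0 ≤ p ω) (hp1 : ∑ ω, p ω = 1)
    (X : ∀ i, Ω → V i) (Y : ∀ j, Ω → W j)
    (hrep : IsRepresentation p (joint X) Y) :
    tc p X ≤ tc p Y + tcL p X Y + ∑ i, condEnt p (X i) (joint Y) := by
  have hswapF : ∀ i, ent p (fun ω => (joint Y ω, X i ω)) = ent p (fun ω => (X i ω, joint Y ω)) :=
    fun i => my_ent_swap p _ _
  have hswapE : ∀ j, ent p (fun ω => (Y j ω, joint X ω)) = ent p (fun ω => (joint X ω, Y j ω)) :=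
    fun j => my_ent_swap p _ _
  have hG := my_repr_sum_ent p hp0 X Y hrep
  have hF : ent p (joint Y) ≤ ent p (fun ω => (joint X ω, joint Y ω)) :=
    my_ent_le_ent_pair p hp0 _ _
  simp only [tc, tcL, mi, condEnt]
  simp only [hswapF, hswapE]
  simp only [Finset.sum_sub_distrib, Finset.sum_add_distrib, Finset.sum_const,
    Finset.card_univ, Fintype.card_fin, nsmul_eq_mul]
  linarith [hG, hF]
end

section
/- (Upper Bound on TC(X)) If Y^{1:r} = (Y^1,...,Y^r) is a hierarchical representation of X = (X_1,...,X_n) with Y^0 := X, all variables discrete (finite-valued), and the top layer consists of a single variable (m_r = 1), then TC(X) ≤ Σ_{k=1}^r ( TC_L(Y^{k-1};Y^k) + Σ_{i=1}^{m_{k-1}} H(Y^{k-1}_i | Y^k) ). -/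
open Finset

set_option linter.unusedSectionVars false

section Helpers

variable {Ω : Type} [Fintype Ω] {α β : Type} [DecidableEq α] [DecidableEq β]
  (p : Ω → ℝ)

lemma prob_nonneg (hp0 : ∀ ω, 0 ≤ p ω) (f : Ω → α) (a : α) : 0 ≤ prob p f a := by
  refine Finset.sum_nonneg fun ω _ => ?_
  split
  · exact hp0 ω
  · exact le_refl 0

lemma prob_comp (f : Ω → α) [Fintype α] (h : α → β) (c : β) :
    prob p (fun ω => h (f ω)) c = ∑ v : α, if h v = c then prob p f v else 0 := by
  have key : ∀ v : α, (if h v = c then prob p f v else 0)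
      = ∑ ω : Ω, if f ω = v ∧ h v = c then p ω else 0 := by
    intro v
    by_cases hv : h v = c
    · simp only [hv, if_true, and_true]; rfl
    · simp [hv]
  simp only [key]
  rw [Finset.sum_comm]
  refine Finset.sum_congr rfl fun ω _ => ?_
  simp [ite_and]

/-- Grouping a sum according to a map `h`. -/
lemma sum_group {γ δ : Type} [Fintype γ] [Fintype δ] [DecidableEq δ]
    (F : γ → ℝ) (h : γ → δ) (G : δ → ℝ) :
    ∑ v, F v * G (h v) = ∑ d, (∑ v, if h v = d then F v else 0) * G d := by
  simp only [Finset.sum_mul, ite_mul, zero_mul]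
  rw [Finset.sum_comm]
  refine Finset.sum_congr rfl fun v _ => ?_
  simp

end Helpers
section Helpers2

variable {Ω : Type} [Fintype Ω] {α β : Type} [DecidableEq α] [DecidableEq β]
  (p : Ω → ℝ)

lemma prob_comp_inj [Fintype α] {e : α → β} (he : Function.Injective e)
    (f : Ω → α) (a : α) : prob p (fun ω => e (f ω)) (e a) = prob p f a := by
  unfold prob
  refine Finset.sum_congr rfl fun ω _ => ?_
  simp [he.eq_iff]

lemma prob_comp_not_mem {e : α → β} (f : Ω → α) {b : β}
    (hb : ∀ a, e a ≠ b) : prob p (fun ω => e (f ω)) b = 0 := by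
  unfold prob
  refine Finset.sum_eq_zero fun ω _ => ?_
  simp [hb (f ω)]

lemma ent_comp_inj [Fintype α] [Fintype β] {e : α → β} (he : Function.Injective e)
    (f : Ω → α) : ent p (fun ω => e (f ω)) = ent p f := by
  unfold ent
  congr 1
  rw [← Finset.sum_subset (Finset.subset_univ (Finset.univ.image e))]
  · rw [Finset.sum_image (fun a _ a' _ h => he h)]
    refine Finset.sum_congr rfl fun a _ => ?_
    rw [prob_comp_inj p he]
  · intro b _ hb
    have : ∀ a, e a ≠ b := by
      intro a hab
      exact hb (Finset.mem_image.mpr ⟨a, Finset.mem_univ a, hab⟩)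
    rw [prob_comp_not_mem p f this]
    simp

lemma ent_comm [Fintype α] [Fintype β] (f : Ω → α) (g : Ω → β) :
    ent p (fun ω => (f ω, g ω)) = ent p (fun ω => (g ω, f ω)) := by
  have : ent p (fun ω => Prod.swap ((g ω, f ω))) = ent p (fun ω => (g ω, f ω)) :=
    ent_comp_inj p Prod.swap_injective _
  exact this.symm ▸ rfl

/-- marginal: prob of the second component, as a sum over a product type. -/
lemma prob_snd_eq [Fintype α] [Fintype β] (f : Ω → α) (g : Ω → β) (b : β) :
    prob p g b = ∑ a : α, prob p (fun ω => (f ω, g ω)) (a, b) := by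
  have := prob_comp p (fun ω => (f ω, g ω)) Prod.snd b
  rw [show prob p g b = prob p (fun ω => Prod.snd (f ω, g ω)) b from rfl, this]
  rw [Fintype.sum_prod_type]
  refine Finset.sum_congr rfl fun a _ => ?_
  simp

end Helpers2
set_option linter.unusedSectionVars false

section Helpers3

variable {Ω : Type} [Fintype Ω] {α β : Type} [DecidableEq α] [DecidableEq β]
  (p : Ω → ℝ)

lemma ent_snd_le [Fintype α] [Fintype β] (hp0 : ∀ ω, 0 ≤ p ω)
    (f : Ω → α) (g : Ω → β) :
    ent p g ≤ ent p (fun ω => (f ω, g ω)) := by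
  set q : α × β → ℝ := prob p (fun ω => (f ω, g ω)) with hq
  have hqn : ∀ c, 0 ≤ q c := fun c => prob_nonneg p hp0 _ c
  have hmarg : ∀ b, prob p g b = ∑ a : α, q (a, b) := fun b => prob_snd_eq p f g b
  have hle : ∀ a b, q (a, b) ≤ prob p g b := by
    intro a b
    rw [hmarg b]
    exact Finset.single_le_sum (fun a' _ => hqn (a', b)) (Finset.mem_univ a)
  unfold ent
  rw [neg_le_neg_iff]
  have step1 : ∑ b : β, prob p g b * Real.log (prob p g b)
      = ∑ c : α × β, q c * Real.log (prob p g c.2) := by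
    rw [Fintype.sum_prod_type_right]
    refine Finset.sum_congr rfl fun b _ => ?_
    rw [hmarg b, Finset.sum_mul]
    refine Finset.sum_congr rfl fun a _ => ?_
    rw [← hmarg b]
  rw [step1]
  refine Finset.sum_le_sum fun c _ => ?_
  rcases eq_or_lt_of_le (hqn c) with h0 | h0
  · rw [show prob p (fun ω => (f ω, g ω)) c = q c from rfl, ← h0]
    simp
  · have h1 : q c ≤ prob p g c.2 := by rw [hq]; exact hle c.1 c.2
    have h2 : Real.log (q c) ≤ Real.log (prob p g c.2) := Real.log_le_log h0 h1
    nlinarith [h0]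

end Helpers3
section Helpers4

variable {Ω : Type} [Fintype Ω] {α : Type} [Fintype α] [DecidableEq α]

lemma ent_rep {m : ℕ} {W : Fin m → Type} [∀ j, Fintype (W j)] [∀ j, DecidableEq (W j)]
    (p : Ω → ℝ) (hp0 : ∀ ω, 0 ≤ p ω) (X : Ω → α) (Y : ∀ j, Ω → W j)
    (hrep : IsRepresentation p X Y) :
    ∑ j, ent p (fun ω => (X ω, Y j ω))
      = ent p (fun ω => (X ω, joint Y ω)) + ((m : ℝ) - 1) * ent p X := by
  rcases Nat.eq_zero_or_pos m with hm | hm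
  · subst hm
    have z0 : ∀ j : Fin 0, W j := fun j => j.elim0
    have hz : ∀ ω, joint Y ω = z0 := by
      intro ω; funext j; exact j.elim0
    have he : Function.Injective (fun a : α => (a, z0)) := by
      intro a a' h; exact congrArg Prod.fst h
    have : ent p (fun ω => (X ω, joint Y ω)) = ent p X := by
      rw [show (fun ω => (X ω, joint Y ω))
          = (fun ω => (fun a : α => (a, z0)) (X ω)) by
        funext ω; rw [hz ω]]
      exact ent_comp_inj p he X
    simp [this]
  -- main case m ≥ 1
  set Q : α × (∀ j, W j) → ℝ := prob p (fun ω => (X ω, joint Y ω)) with hQdef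
  set P : α → ℝ := prob p X with hPdef
  have hQn : ∀ v, 0 ≤ Q v := fun v => prob_nonneg p hp0 _ v
  have hP : ∀ a, P a = ∑ v : α × (∀ j, W j), if v.1 = a then Q v else 0 := by
    intro a
    exact prob_comp p (fun ω => (X ω, joint Y ω)) Prod.fst a
  have hR : ∀ (j : Fin m) (c : α × W j),
      prob p (fun ω => (X ω, Y j ω)) c
        = ∑ v : α × (∀ j, W j), if (v.1, v.2 j) = c then Q v else 0 := by
    intro j c
    exact prob_comp p (fun ω => (X ω, joint Y ω)) (fun v => (v.1, v.2 j)) c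
  have hQP : ∀ v, Q v ≤ P v.1 := by
    intro v
    rw [hP]
    have := Finset.single_le_sum
      (f := fun w : α × (∀ j, W j) => if w.1 = v.1 then Q w else 0)
      (fun w _ => by split; exacts [hQn w, le_refl 0]) (Finset.mem_univ v)
    simpa using this
  have hQR : ∀ v (j : Fin m), Q v ≤ prob p (fun ω => (X ω, Y j ω)) (v.1, v.2 j) := by
    intro v j
    rw [hR]
    have := Finset.single_le_sum
      (f := fun w : α × (∀ j, W j) => if (w.1, w.2 j) = (v.1, v.2 j) then Q w else 0)
      (fun w _ => by split; exacts [hQn w, le_refl 0]) (Finset.mem_univ v)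
    simpa using this
  have key : ∀ v, Q v * Real.log (Q v)
      = Q v * ((∑ j, Real.log (prob p (fun ω => (X ω, Y j ω)) (v.1, v.2 j)))
          - ((m : ℝ) - 1) * Real.log (P v.1)) := by
    intro v
    rcases eq_or_lt_of_le (hQn v) with h0 | h0
    · rw [← h0]; ring
    · have hPv : 0 < P v.1 := lt_of_lt_of_le h0 (hQP v)
      have hRv : ∀ j, 0 < prob p (fun ω => (X ω, Y j ω)) (v.1, v.2 j) :=
        fun j => lt_of_lt_of_le h0 (hQR v j)
      have hid := hrep v.1 v.2
      have hlog : Real.log (P v.1 ^ (m - 1) * Q v)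
          = Real.log (∏ j, prob p (fun ω => (X ω, Y j ω)) (v.1, v.2 j)) := by
        rw [hid]
      rw [Real.log_mul (by positivity) (ne_of_gt h0), Real.log_pow,
        Real.log_prod (fun j _ => ne_of_gt (hRv j))] at hlog
      have hcast : ((m - 1 : ℕ) : ℝ) = (m : ℝ) - 1 := by
        have : 1 ≤ m := hm
        push_cast [this]
        ring
      rw [hcast] at hlog
      have : Real.log (Q v) = (∑ j, Real.log (prob p (fun ω => (X ω, Y j ω)) (v.1, v.2 j)))
          - ((m : ℝ) - 1) * Real.log (P v.1) := by linarith
      rw [this]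
  have stepB : ∀ j : Fin m, ∑ v, Q v * Real.log (prob p (fun ω => (X ω, Y j ω)) (v.1, v.2 j))
      = ∑ c : α × W j, prob p (fun ω => (X ω, Y j ω)) c
          * Real.log (prob p (fun ω => (X ω, Y j ω)) c) := by
    intro j
    rw [sum_group Q (fun v => (v.1, v.2 j))
      (fun c => Real.log (prob p (fun ω => (X ω, Y j ω)) c))]
    refine Finset.sum_congr rfl fun c _ => ?_
    rw [← hR j c]
  have stepC : ∑ v, Q v * Real.log (P v.1) = ∑ a, P a * Real.log (P a) := by
    rw [sum_group Q Prod.fst (fun a => Real.log (P a))]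
    refine Finset.sum_congr rfl fun a _ => ?_
    rw [← hP a]
  have main : ∑ v, Q v * Real.log (Q v)
      = (∑ j, ∑ c : α × W j, prob p (fun ω => (X ω, Y j ω)) c
          * Real.log (prob p (fun ω => (X ω, Y j ω)) c))
        - ((m : ℝ) - 1) * ∑ a, P a * Real.log (P a) := by
    calc ∑ v, Q v * Real.log (Q v)
        = ∑ v, (Q v * ((∑ j, Real.log (prob p (fun ω => (X ω, Y j ω)) (v.1, v.2 j)))
          - ((m : ℝ) - 1) * Real.log (P v.1))) := Finset.sum_congr rfl fun v _ => key v
      _ = (∑ v, ∑ j, Q v * Real.log (prob p (fun ω => (X ω, Y j ω)) (v.1, v.2 j)))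
          - ((m : ℝ) - 1) * ∑ v, Q v * Real.log (P v.1) := by
        rw [Finset.mul_sum, ← Finset.sum_sub_distrib]
        refine Finset.sum_congr rfl fun v _ => ?_
        rw [mul_sub, Finset.mul_sum]
        ring
      _ = (∑ j, ∑ v, Q v * Real.log (prob p (fun ω => (X ω, Y j ω)) (v.1, v.2 j)))
          - ((m : ℝ) - 1) * ∑ v, Q v * Real.log (P v.1) := by rw [Finset.sum_comm]
      _ = _ := by
        rw [stepC]
        congr 1
        exact Finset.sum_congr rfl fun j _ => stepB j
  unfold ent
  rw [← hQdef, ← hPdef]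
  have hsum : ∑ j : Fin m, -∑ c : α × W j, prob p (fun ω => (X ω, Y j ω)) c
      * Real.log (prob p (fun ω => (X ω, Y j ω)) c)
      = -∑ j : Fin m, ∑ c : α × W j, prob p (fun ω => (X ω, Y j ω)) c
      * Real.log (prob p (fun ω => (X ω, Y j ω)) c) := by
    rw [Finset.sum_neg_distrib]
  rw [hsum, main]
  ring

end Helpers4
section Helpers5

variable {Ω : Type} [Fintype Ω]

lemma condEnt_nonneg {α β : Type} [Fintype α] [DecidableEq α] [Fintype β] [DecidableEq β]
    (p : Ω → ℝ) (hp0 : ∀ ω, 0 ≤ p ω) (f : Ω → α) (g : Ω → β) :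
    0 ≤ condEnt p f g := by
  have := ent_snd_le p hp0 f g
  unfold condEnt
  linarith

lemma layer_eq {n m : ℕ} {V : Fin n → Type} [∀ i, Fintype (V i)] [∀ i, DecidableEq (V i)]
    {W : Fin m → Type} [∀ j, Fintype (W j)] [∀ j, DecidableEq (W j)]
    (p : Ω → ℝ) (hp0 : ∀ ω, 0 ≤ p ω) (X : ∀ i, Ω → V i) (Z : ∀ j, Ω → W j)
    (hrep : IsRepresentation p (joint X) Z) :
    tc p X = tcCond p X (joint Z) + tcL p X Z + tc p Z := by
  have hB := ent_rep p hp0 (joint X) Z hrep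
  have s1 : ∀ i, ent p (fun ω => (joint Z ω, X i ω))
      = ent p (fun ω => (X i ω, joint Z ω)) := fun i => ent_comm p _ _
  have s2 : ∀ j, ent p (fun ω => (Z j ω, joint X ω))
      = ent p (fun ω => (joint X ω, Z j ω)) := fun j => ent_comm p _ _
  simp only [tc, tcCond, tcL, mi, condEnt, s1, s2]
  simp only [Finset.sum_sub_distrib, Finset.sum_add_distrib, Finset.sum_const,
    Finset.card_univ, Fintype.card_fin, nsmul_eq_mul]
  linarith [hB]

lemma layer_le {n m : ℕ} {V : Fin n → Type} [∀ i, Fintype (V i)] [∀ i, DecidableEq (V i)]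
    {W : Fin m → Type} [∀ j, Fintype (W j)] [∀ j, DecidableEq (W j)]
    (p : Ω → ℝ) (hp0 : ∀ ω, 0 ≤ p ω) (X : ∀ i, Ω → V i) (Z : ∀ j, Ω → W j)
    (hrep : IsRepresentation p (joint X) Z) :
    tc p X ≤ (tcL p X Z + ∑ i, condEnt p (X i) (joint Z)) + tc p Z := by
  have h1 := layer_eq p hp0 X Z hrep
  have h2 : tcCond p X (joint Z) ≤ ∑ i, condEnt p (X i) (joint Z) := by
    unfold tcCond
    have := condEnt_nonneg p hp0 (joint X) (joint Z)
    linarith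
  linarith

lemma tc_single {n : ℕ} {V : Fin n → Type} [∀ i, Fintype (V i)] [∀ i, DecidableEq (V i)]
    (p : Ω → ℝ) (hn : n = 1) (X : ∀ i, Ω → V i) : tc p X = 0 := by
  subst hn
  have he : Function.Injective (fun y : ∀ i, V i => y 0) := by
    intro y y' h
    funext i
    have hi : i = 0 := Subsingleton.elim i 0
    rw [hi]
    exact h
  have h1 : ent p (joint X) = ent p (X 0) := by
    have := ent_comp_inj p he (joint X)
    rw [← this]
    rfl
  have h2 : ∑ i, ent p (X i) = ent p (X 0) := Fin.sum_univ_one _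
  unfold tc
  rw [h1, h2]
  ring

end Helpers5

/-- Upper Bound on `TC(X)`: if `Y¹,…,Yʳ` is a hierarchical representation
of `X` (here `Y 0 = X`), all variables finite-valued, and the top layer consists of a
single variable (`m r = 1`), then
`TC(X) ≤ ∑ₖ ( TC_L(Y^{k-1};Y^k) + ∑ᵢ H(Y^{k-1}ᵢ | Y^k) )`. -/
theorem stmt_10 {Ω : Type} [Fintype Ω] (r : ℕ)
    (m : ℕ → ℕ) (W : (k : ℕ) → Fin (m k) → Type)
    [∀ k j, Fintype (W k j)] [∀ k j, DecidableEq (W k j)]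
    (p : Ω → ℝ) (hp0 : ∀ ω, 0 ≤ p ω) (hp1 : ∑ ω, p ω = 1)
    (Y : (k : ℕ) → (j : Fin (m k)) → Ω → W k j)
    (hrep : ∀ k < r, IsRepresentation p (joint (Y k)) (Y (k + 1)))
    (htop : m r = 1) :
    tc p (Y 0) ≤ ∑ k ∈ Finset.range r,
      (tcL p (Y k) (Y (k + 1)) + ∑ i, condEnt p (Y k i) (joint (Y (k + 1)))) := by
  have tel : ∀ s, (∀ k < s, IsRepresentation p (joint (Y k)) (Y (k + 1))) →
      tc p (Y 0) ≤ (∑ k ∈ Finset.range s,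
        (tcL p (Y k) (Y (k + 1)) + ∑ i, condEnt p (Y k i) (joint (Y (k + 1)))))
        + tc p (Y s) := by
    intro s
    induction s with
    | zero => intro _; simp
    | succ s ih =>
      intro hs
      have h1 := ih (fun k hk => hs k (Nat.lt_succ_of_lt hk))
      have h2 := layer_le p hp0 (Y s) (Y (s + 1)) (hs s (Nat.lt_succ_self s))
      rw [Finset.sum_range_succ]
      linarith
  have h1 := tel r hrep
  have h0 := tc_single p htop (Y r)
  linarith
end
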